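/- arXiv:2205.01469 — 3 statements merged into one kernel-verified Lean document; each statement's English description precedes it below -/
import Mathlib

section
/- Every m×n bimatrix game G can be written in exactly one way as G = I + W, where I is a normalized identical interest game and W is a sum of a zero-sum game and a non-strategic game; that is, the space of m×n bimatrix games is the direct sum (𝓘∩𝓝) ⊕ (𝓩+𝓔). -/
open Matrix Filter

abbrev Game (m n : ℕ) := Matrix (Fin m) (Fin n) ℝ × Matrix (Fin m) (Fin n) ℝ

/-- A non-strategic game: player 1's payoff depends only on player 2's action and vice versa. -/
def NonStrategic {m n : ℕ} (G : Game m n) : Prop :=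
  ∃ (x : Fin n → ℝ) (y : Fin m → ℝ), (∀ i j, G.1 i j = x j) ∧ (∀ i j, G.2 i j = y i)

/-- Identical interest games: A = B. -/
def IdInterest {m n : ℕ} (G : Game m n) : Prop := G.1 = G.2

/-- Zero-sum games: A + B = 0. -/
def ZeroSum {m n : ℕ} (G : Game m n) : Prop := G.1 + G.2 = 0

/-- Normalized games: columns of A and rows of B sum to zero. -/
def Normalized {m n : ℕ} (G : Game m n) : Prop :=
  (∀ j, ∑ i, G.1 i j = 0) ∧ (∀ i, ∑ j, G.2 i j = 0)

/-- Potential games: sums of an identical-interest game and a non-strategic game (𝓘+𝓔). -/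
def IsPotentialGame {m n : ℕ} (G : Game m n) : Prop :=
  ∃ I E : Game m n, IdInterest I ∧ NonStrategic E ∧ G = I + E

/-- Games additionally equivalent to a zero-sum game (𝓩+𝓔). -/
def IsZeroSumEquivAdd {m n : ℕ} (G : Game m n) : Prop :=
  ∃ Z E : Game m n, ZeroSum Z ∧ NonStrategic E ∧ G = Z + E

/-- Zero-sum equivalent potential games, 𝓑 = (𝓘+𝓔) ∩ (𝓩+𝓔). -/
def IsZSEP {m n : ℕ} (G : Game m n) : Prop := IsPotentialGame G ∧ IsZeroSumEquivAdd G

/-- Normalized harmonic games: normalized with mA + nB = 0. -/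
def NormHarmonic (m n : ℕ) (G : Game m n) : Prop :=
  Normalized G ∧ (m : ℝ) • G.1 + (n : ℝ) • G.2 = 0

/-- Normalized potential games, 𝓟 = 𝓝 ∩ (𝓘+𝓔). -/
def NormPotential {m n : ℕ} (G : Game m n) : Prop :=
  Normalized G ∧ IsPotentialGame G

/-- Strategic equivalence: G' = (αA, βB) + E with α, β > 0 and E non-strategic. -/
def StratEquiv {m n : ℕ} (G G' : Game m n) : Prop :=
  ∃ α β : ℝ, 0 < α ∧ 0 < β ∧ ∃ E : Game m n,
    NonStrategic E ∧ G'.1 = α • G.1 + E.1 ∧ G'.2 = β • G.2 + E.2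

/-- G ∈ 𝓢(𝓩): G is strategically equivalent to some zero-sum game. -/
def StratEquivZeroSum {m n : ℕ} (G : Game m n) : Prop :=
  ∃ Z : Game m n, ZeroSum Z ∧ StratEquiv G Z

/-- G ∈ 𝓢(𝓘): G is strategically equivalent to some identical interest game. -/
def StratEquivIdInterest {m n : ℕ} (G : Game m n) : Prop :=
  ∃ I : Game m n, IdInterest I ∧ StratEquiv G I

/-- Nash equilibrium of a bimatrix game. -/
def IsNash {m n : ℕ} (G : Game m n) (p : Fin m → ℝ) (q : Fin n → ℝ) : Prop :=
  p ∈ stdSimplex ℝ (Fin m) ∧ q ∈ stdSimplex ℝ (Fin n) ∧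
  (∀ p' ∈ stdSimplex ℝ (Fin m), p' ⬝ᵥ G.1.mulVec q ≤ p ⬝ᵥ G.1.mulVec q) ∧
  (∀ q' ∈ stdSimplex ℝ (Fin n), p ⬝ᵥ G.2.mulVec q' ≤ p ⬝ᵥ G.2.mulVec q)

/-- Discrete-time fictitious play sequence of a bimatrix game. -/
def IsDFP {m n : ℕ} (G : Game m n) (p : ℕ → Fin m → ℝ) (q : ℕ → Fin n → ℝ) : Prop :=
  (∀ t, p t ∈ stdSimplex ℝ (Fin m) ∧ q t ∈ stdSimplex ℝ (Fin n)) ∧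
  ∀ t : ℕ, ∃ (i : Fin m) (j : Fin n),
    (∀ i', (G.1.mulVec (q t)) i' ≤ (G.1.mulVec (q t)) i) ∧
    (∀ j', (G.2.vecMul (p t)) j' ≤ (G.2.vecMul (p t)) j) ∧
    p (t + 1) = ((t : ℝ) / (t + 1)) • p t + ((1 : ℝ) / (t + 1)) • (Pi.single i 1 : Fin m → ℝ) ∧
    q (t + 1) = ((t : ℝ) / (t + 1)) • q t + ((1 : ℝ) / (t + 1)) • (Pi.single j 1 : Fin n → ℝ)

/-- The fictitious play property: every DFP sequence converges to the set of Nash equilibria. -/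
def HasFPP {m n : ℕ} (G : Game m n) : Prop :=
  ∀ p q, IsDFP G p q →
    Tendsto (fun t => Metric.infDist (p t, q t)
      {pq : (Fin m → ℝ) × (Fin n → ℝ) | IsNash G pq.1 pq.2}) atTop (nhds 0)

/-- The class 𝓓: at least one payoff matrix has the form M i j = x i + y j. -/
def InD {m n : ℕ} (G : Game m n) : Prop :=
  (∃ (x : Fin m → ℝ) (y : Fin n → ℝ), ∀ i j, G.1 i j = x i + y j) ∨
  (∃ (x : Fin m → ℝ) (y : Fin n → ℝ), ∀ i j, G.2 i j = x i + y j)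

/-!
Double centering `S ↦ S - (row means) - (column means) + (grand mean)` is a linear projection
onto the doubly centered matrices that kills exactly the additively separable ones
`u i + v j`. A game `(A, B)` lies in 𝓩+𝓔 iff `A + B` is separable, so in a decomposition
`G = (D, D) + W` the matrix `2 • D` must be the double centering of `A + B`, and conversely
that choice works.
-/

namespace Matrix

variable {ι κ : Type*} [Fintype ι] [Fintype κ]

def IsSeparable (S : Matrix ι κ ℝ) : Prop :=
  ∃ (u : ι → ℝ) (v : κ → ℝ), ∀ i j, S i j = u i + v j

noncomputable def doubleCenter : Matrix ι κ ℝ →ₗ[ℝ] Matrix ι κ ℝ where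
  toFun S := of fun i j => S i j - (∑ j', S i j') / Fintype.card κ
    - (∑ i', S i' j) / Fintype.card ι
    + (∑ i', ∑ j', S i' j') / (Fintype.card ι * Fintype.card κ)
  map_add' S T := by
    ext i j
    simp only [of_apply, add_apply, Finset.sum_add_distrib]
    ring
  map_smul' c S := by
    ext i j
    simp only [of_apply, smul_apply, smul_eq_mul, RingHom.id_apply, ← Finset.mul_sum]
    ring

theorem doubleCenter_apply (S : Matrix ι κ ℝ) (i : ι) (j : κ) :
    doubleCenter S i j = S i j - (∑ j', S i j') / Fintype.card κ
      - (∑ i', S i' j) / Fintype.card ι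
      + (∑ i', ∑ j', S i' j') / (Fintype.card ι * Fintype.card κ) :=
  rfl

theorem sum_doubleCenter_row (S : Matrix ι κ ℝ) (i : ι) : ∑ j, doubleCenter S i j = 0 := by
  rcases isEmpty_or_nonempty κ with _ | _
  · exact Finset.sum_of_isEmpty _
  have hκ0 : (Fintype.card κ : ℝ) ≠ 0 := by positivity
  simp only [doubleCenter_apply, Finset.sum_add_distrib, Finset.sum_sub_distrib,
    Finset.sum_const, Finset.card_univ, nsmul_eq_mul, ← Finset.sum_div]
  rw [Finset.sum_comm (f := fun j i' => S i' j)]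
  field_simp
  ring

theorem sum_doubleCenter_col (S : Matrix ι κ ℝ) (j : κ) : ∑ i, doubleCenter S i j = 0 := by
  rcases isEmpty_or_nonempty ι with _ | _
  · exact Finset.sum_of_isEmpty _
  have hι0 : (Fintype.card ι : ℝ) ≠ 0 := by positivity
  simp only [doubleCenter_apply, Finset.sum_add_distrib, Finset.sum_sub_distrib,
    Finset.sum_const, Finset.card_univ, nsmul_eq_mul, ← Finset.sum_div]
  field_simp
  ring

theorem isSeparable_sub_doubleCenter (S : Matrix ι κ ℝ) : IsSeparable (S - doubleCenter S) :=
  ⟨fun i => (∑ j', S i j') / Fintype.card κ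
      - (∑ i', ∑ j', S i' j') / (Fintype.card ι * Fintype.card κ),
    fun j => (∑ i', S i' j) / Fintype.card ι, fun i j => by
      rw [sub_apply, doubleCenter_apply]
      ring⟩

theorem doubleCenter_eq_zero_of_isSeparable {S : Matrix ι κ ℝ} (hS : IsSeparable S) :
    doubleCenter S = 0 := by
  obtain ⟨u, v, huv⟩ := hS
  ext i j
  have : Nonempty ι := ⟨i⟩
  have : Nonempty κ := ⟨j⟩
  have hι0 : (Fintype.card ι : ℝ) ≠ 0 := by positivity
  have hκ0 : (Fintype.card κ : ℝ) ≠ 0 := by positivity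
  simp only [doubleCenter_apply, huv, zero_apply, Finset.sum_add_distrib, Finset.sum_const,
    Finset.card_univ, nsmul_eq_mul]
  field_simp
  rw [← Finset.mul_sum]
  ring

theorem doubleCenter_eq_self {D : Matrix ι κ ℝ} (hrow : ∀ i, ∑ j, D i j = 0)
    (hcol : ∀ j, ∑ i, D i j = 0) : doubleCenter D = D := by
  ext i j
  simp [doubleCenter_apply, hrow, hcol]

theorem doubleCenter_eq_of_isSeparable_sub {S D : Matrix ι κ ℝ} (hrow : ∀ i, ∑ j, D i j = 0)
    (hcol : ∀ j, ∑ i, D i j = 0) (hSD : IsSeparable (S - D)) : doubleCenter S = D := by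
  rw [← sub_add_cancel S D, map_add, doubleCenter_eq_zero_of_isSeparable hSD, zero_add,
    doubleCenter_eq_self hrow hcol]

end Matrix

theorem isZeroSumEquivAdd_iff {m n : ℕ} (W : Game m n) :
    IsZeroSumEquivAdd W ↔ IsSeparable (W.1 + W.2) := by
  constructor
  · rintro ⟨Z, E, hZ, ⟨x, y, hx, hy⟩, rfl⟩
    refine ⟨y, x, fun i j => ?_⟩
    have hZij := congrFun₂ hZ i j
    simp only [Prod.fst_add, Prod.snd_add, Matrix.add_apply, Matrix.zero_apply] at hZij ⊢
    rw [hx, hy]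
    linarith
  · rintro ⟨y, x, hxy⟩
    refine ⟨(W.1 - of fun _ j => x j, W.2 - of fun i _ => y i),
      (of fun _ j => x j, of fun i _ => y i), ?_,
      ⟨x, y, fun _ _ => rfl, fun _ _ => rfl⟩, by simp⟩
    ext i j
    have := hxy i j
    simp only [Matrix.add_apply, Matrix.sub_apply, of_apply, Matrix.zero_apply] at this ⊢
    linarith

theorem stmt3_general {m n : ℕ} (G : Game m n) :
    ∃! d : Game m n × Game m n,
      IdInterest d.1 ∧ Normalized d.1 ∧
      IsZeroSumEquivAdd d.2 ∧
      G = d.1 + d.2 := by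
  set C := (2⁻¹ : ℝ) • doubleCenter (G.1 + G.2)
  refine ⟨((C, C), G - (C, C)), ⟨rfl, ?_, ?_, (add_sub_cancel _ _).symm⟩, ?_⟩
  · simp only [Normalized, C, Matrix.smul_apply, smul_eq_mul, ← Finset.mul_sum,
      sum_doubleCenter_col, sum_doubleCenter_row, mul_zero, implies_true, and_self]
  · rw [isZeroSumEquivAdd_iff]
    convert isSeparable_sub_doubleCenter (G.1 + G.2) using 1
    simp only [C, Prod.fst_sub, Prod.snd_sub]
    module
  · rintro ⟨⟨D, D'⟩, W⟩ ⟨rfl : D = D', ⟨hcol, hrow⟩, hW, hG⟩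
    have hD : doubleCenter (G.1 + G.2) = (2 : ℝ) • D := by
      refine doubleCenter_eq_of_isSeparable_sub ?_ ?_ ?_
      · simp [← Finset.mul_sum, hrow]
      · simp [← Finset.mul_sum, hcol]
      · convert (isZeroSumEquivAdd_iff W).1 hW using 1
        rw [hG]
        simp only [Prod.fst_add, Prod.snd_add]
        module
    have hC : C = D := by simp [C, hD]
    rw [hC, hG, add_sub_cancel_left]

theorem stmt3 {m n : ℕ} (hm : 1 ≤ m) (hn : 1 ≤ n) (G : Game m n) :
    ∃! d : Game m n × Game m n,
      IdInterest d.1 ∧ Normalized d.1 ∧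
      IsZeroSumEquivAdd d.2 ∧
      G = d.1 + d.2 :=
  stmt3_general G
end

section
/- Every m×n bimatrix game G can be written in exactly one way as G = P + Z, where P is a sum of an identical interest game and a non-strategic game (a potential game) and Z is a normalized zero-sum game; that is, the space of m×n bimatrix games is the direct sum (𝓘+𝓔) ⊕ (𝓩∩𝓝). -/
/-!
A game `Z` is zero-sum and normalized exactly when `Z = (D, -D)` with `D` doubly centred (all row
and column sums zero), and `(A, B)` is a potential game exactly when `A - B` has the form
`x j - y i`. So the decomposition amounts to writing `(A - B) / 2` uniquely as a doubly centred
matrix plus a matrix `a i + b j`. Existence: subtract the column means, then the row means.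
Uniqueness: a doubly centred matrix `D i j = a i + b j` satisfies
`∑ D i j ^ 2 = ∑ a i * (∑ j, D i j) + ∑ b j * (∑ i, D i j) = 0`.
-/

open Matrix Filter

open Finset
open scoped BigOperators

theorem Fintype.sum_sub_expect {κ M : Type*} [Fintype κ] [AddCommGroup M] [Module ℚ≥0 M]
    (f : κ → M) : ∑ j, (f j - 𝔼 j', f j') = 0 := by
  rw [sum_sub_distrib, sum_const, card_univ, Fintype.card_smul_expect, sub_self]

namespace Matrix

variable {ι κ R : Type*} [Fintype ι] [Fintype κ]

theorem eq_zero_of_sums_eq_zero_of_eq_add [CommRing R] [LinearOrder R] [IsStrictOrderedRing R]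
    {D : Matrix ι κ R} (hcol : ∀ j, ∑ i, D i j = 0) (hrow : ∀ i, ∑ j, D i j = 0)
    {a : ι → R} {b : κ → R} (hD : ∀ i j, D i j = a i + b j) : D = 0 := by
  have hsq : ∑ i, ∑ j, D i j * D i j = 0 := calc
    ∑ i, ∑ j, D i j * D i j = ∑ i, ∑ j, (a i * D i j + b j * D i j) := by
      simp only [hD, add_mul]
    _ = ∑ i, a i * ∑ j, D i j + ∑ j, b j * ∑ i, D i j := by
      simp only [sum_add_distrib, mul_sum]; rw [sum_comm (f := fun i j => b j * D i j)]
    _ = 0 := by simp [hcol, hrow]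
  ext i j
  have hrow_sq := (sum_eq_zero_iff_of_nonneg fun i _ => sum_nonneg fun j _ =>
    mul_self_nonneg (D i j)).mp hsq i (mem_univ i)
  exact mul_self_eq_zero.mp
    ((sum_eq_zero_iff_of_nonneg fun j _ => mul_self_nonneg (D i j)).mp hrow_sq j (mem_univ j))

theorem exists_sums_eq_zero_and_eq_add [AddCommGroup R] [Module ℚ≥0 R] (M : Matrix ι κ R) :
    ∃ D : Matrix ι κ R, (∀ j, ∑ i, D i j = 0) ∧ (∀ i, ∑ j, D i j = 0) ∧
      ∃ (a : ι → R) (b : κ → R), ∀ i j, D i j = M i j + a i + b j := by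
  set N : Matrix ι κ R := fun i j => M i j - 𝔼 i', M i' j
  have hN : ∀ j, ∑ i, N i j = 0 := fun j => Fintype.sum_sub_expect (fun i => M i j)
  refine ⟨fun i j => N i j - 𝔼 j', N i j', fun j => ?_, fun i => Fintype.sum_sub_expect _,
    fun i => -𝔼 j', N i j', fun j => -𝔼 i', M i' j, fun i j => by simp only [N]; abel⟩
  rw [sum_sub_distrib, hN, ← expect_sum_comm, expect_eq_zero fun j _ => hN j, sub_zero]

end Matrix

section Games

variable {m n : ℕ}

theorem isPotentialGame_iff {G : Game m n} : IsPotentialGame G ↔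
    ∃ (x : Fin n → ℝ) (y : Fin m → ℝ), ∀ i j, G.1 i j - G.2 i j = x j - y i := by
  constructor
  · rintro ⟨I, E, hI, ⟨x, y, hx, hy⟩, rfl⟩
    have hI : I.1 = I.2 := hI
    exact ⟨x, y, fun i j => by simp [hx, hy, hI]⟩
  · rintro ⟨x, y, h⟩
    refine ⟨(G.2 - of fun i _ => y i, G.2 - of fun i _ => y i),
      (of fun _ j => x j, of fun i _ => y i), rfl, ⟨x, y, fun _ _ => rfl, fun _ _ => rfl⟩, ?_⟩
    ext i j
    · simp; linarith [h i j]
    · simp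

theorem IsPotentialGame.sub {G G' : Game m n} (hG : IsPotentialGame G)
    (hG' : IsPotentialGame G') : IsPotentialGame (G - G') := by
  obtain ⟨x, y, h⟩ := isPotentialGame_iff.mp hG
  obtain ⟨x', y', h'⟩ := isPotentialGame_iff.mp hG'
  exact isPotentialGame_iff.mpr ⟨x - x', y - y', fun i j => by simp; linarith [h i j, h' i j]⟩

theorem ZeroSum.sub {G G' : Game m n} (hG : ZeroSum G) (hG' : ZeroSum G') :
    ZeroSum (G - G') := by
  unfold ZeroSum at *
  rw [Prod.fst_sub, Prod.snd_sub, sub_add_sub_comm, hG, hG', sub_zero]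

theorem Normalized.sub {G G' : Game m n} (hG : Normalized G) (hG' : Normalized G') :
    Normalized (G - G') :=
  ⟨fun j => by simp [sum_sub_distrib, hG.1 j, hG'.1 j],
    fun i => by simp [sum_sub_distrib, hG.2 i, hG'.2 i]⟩

theorem eq_zero_of_isPotentialGame_of_zeroSum_of_normalized {Z : Game m n}
    (hP : IsPotentialGame Z) (hZ : ZeroSum Z) (hN : Normalized Z) : Z = 0 := by
  obtain ⟨x, y, h⟩ := isPotentialGame_iff.mp hP
  have hZ2 : Z.2 = -Z.1 := eq_neg_of_add_eq_zero_right hZ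
  have hZ1 : Z.1 = 0 := by
    refine Matrix.eq_zero_of_sums_eq_zero_of_eq_add hN.1 (fun i => ?_)
      (a := fun i => -y i / 2) (b := fun j => x j / 2) (fun i j => ?_)
    · simpa [hZ2] using hN.2 i
    · have := h i j
      simp only [hZ2, Matrix.neg_apply] at this
      linarith
  ext1
  · exact hZ1
  · rw [hZ2, hZ1, neg_zero]; rfl

theorem exists_isPotentialGame_add_zeroSum_normalized (G : Game m n) :
    ∃ P Z : Game m n, IsPotentialGame P ∧ ZeroSum Z ∧ Normalized Z ∧ G = P + Z := by
  obtain ⟨D, hcol, hrow, a, b, hD⟩ :=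
    Matrix.exists_sums_eq_zero_and_eq_add ((2⁻¹ : ℝ) • (G.1 - G.2))
  refine ⟨G - (D, -D), (D, -D), ?_, add_neg_cancel D, ⟨hcol, fun i => by simp [hrow i]⟩,
    (sub_add_cancel G _).symm⟩
  refine isPotentialGame_iff.mpr ⟨fun j => -2 * b j, fun i => 2 * a i, fun i j => ?_⟩
  have := hD i j
  simp only [Matrix.smul_apply, Matrix.sub_apply, smul_eq_mul] at this
  simp only [Prod.fst_sub, Prod.snd_sub, Matrix.sub_apply, Matrix.neg_apply]
  linarith

end Games

theorem stmt4_general {m n : ℕ} (G : Game m n) :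
    ∃! d : Game m n × Game m n,
      IsPotentialGame d.1 ∧
      ZeroSum d.2 ∧ Normalized d.2 ∧
      G = d.1 + d.2 := by
  obtain ⟨P, Z, hP, hZ, hN, hG⟩ := exists_isPotentialGame_add_zeroSum_normalized G
  refine ⟨(P, Z), ⟨hP, hZ, hN, hG⟩, ?_⟩
  rintro ⟨P', Z'⟩
    ⟨hP' : IsPotentialGame P', hZ' : ZeroSum Z', hN' : Normalized Z', hG' : G = P' + Z'⟩
  have hdiff : Z' - Z = P - P' := by
    rw [sub_eq_sub_iff_add_eq_add, add_comm, ← hG', hG]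
  have hZZ : Z' = Z := sub_eq_zero.mp <| eq_zero_of_isPotentialGame_of_zeroSum_of_normalized
    (hdiff ▸ hP.sub hP') (hZ'.sub hZ) (hN'.sub hN)
  subst hZZ
  rw [add_right_cancel (hG'.symm.trans hG)]

theorem stmt4 {m n : ℕ} (hm : 1 ≤ m) (hn : 1 ≤ n) (G : Game m n) :
    ∃! d : Game m n × Game m n,
      IsPotentialGame d.1 ∧
      ZeroSum d.2 ∧ Normalized d.2 ∧
      G = d.1 + d.2 :=
  stmt4_general G
end

section
/- For m×n bimatrix games, the following three classes coincide: (1) the class of games that are both strategically equivalent to a zero-sum game and strategically equivalent to an identical interest game, 𝓢(𝓩)∩𝓢(𝓘); (2) the class of games that are both additionally equivalent to a zero-sum game and additionally equivalent to an identical interest game, 𝓐(𝓩)∩𝓐(𝓘) = (𝓩+𝓔)∩(𝓘+𝓔); and (3) the class 𝓑 of zero-sum equivalent potential games. -/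
open Matrix Filter

/-
A game in `𝓢(𝓩) ∩ 𝓢(𝓘)` yields two relations `αA + βB ≡ 0` and `γA - δB ≡ 0` modulo
additively separable matrices `M i j = r i + c j` (the payoffs of non-strategic games are of
this form), with `α, β, γ, δ > 0`. Their determinant `-(αδ + βγ)` is nonzero, so `A` and `B` are
themselves separable, and a game with separable payoffs is both zero-sum and identical interest
up to a non-strategic game. The reverse inclusions take `α = β = 1`.
-/

def separableMatrices (ι κ : Type*) : Submodule ℝ (Matrix ι κ ℝ) where
  carrier := {M | ∃ (r : ι → ℝ) (c : κ → ℝ), ∀ i j, M i j = r i + c j}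
  add_mem' := by
    rintro M N ⟨r, c, hM⟩ ⟨r', c', hN⟩
    exact ⟨r + r', c + c', fun i j => by simp only [Matrix.add_apply, hM, hN, Pi.add_apply]; ring⟩
  zero_mem' := ⟨0, 0, fun _ _ => by simp⟩
  smul_mem' := by
    rintro a M ⟨r, c, hM⟩
    refine ⟨a • r, a • c, fun i j => ?_⟩
    simp only [Matrix.smul_apply, hM, Pi.smul_apply, smul_eq_mul]
    ring

theorem Submodule.mem_and_mem_of_smul_add_smul_mem_of_smul_sub_smul_mem {K V : Type*} [Field K]
    [AddCommGroup V] [Module K V] (p : Submodule K V) {a b : V} {α β γ δ : K}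
    (hdet : α * δ + β * γ ≠ 0) (hsum : α • a + β • b ∈ p) (hdiff : γ • a - δ • b ∈ p) :
    a ∈ p ∧ b ∈ p := by
  have ha : (α * δ + β * γ) • a = δ • (α • a + β • b) + β • (γ • a - δ • b) := by module
  have hb : (α * δ + β * γ) • b = γ • (α • a + β • b) - α • (γ • a - δ • b) := by module
  refine ⟨(p.smul_mem_iff hdet).mp ?_, (p.smul_mem_iff hdet).mp ?_⟩
  · rw [ha]; exact p.add_mem (p.smul_mem _ hsum) (p.smul_mem _ hdiff)
  · rw [hb]; exact p.sub_mem (p.smul_mem _ hsum) (p.smul_mem _ hdiff)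

section Games

variable {m n : ℕ}

theorem NonStrategic.fst_mem_separableMatrices {E : Game m n} (hE : NonStrategic E) :
    E.1 ∈ separableMatrices (Fin m) (Fin n) := by
  obtain ⟨x, -, hx, -⟩ := hE
  exact ⟨0, x, fun i j => by simp [hx]⟩

theorem NonStrategic.snd_mem_separableMatrices {E : Game m n} (hE : NonStrategic E) :
    E.2 ∈ separableMatrices (Fin m) (Fin n) := by
  obtain ⟨-, y, -, hy⟩ := hE
  exact ⟨y, 0, fun i j => by simp [hy]⟩

theorem NonStrategic.neg {E : Game m n} (hE : NonStrategic E) : NonStrategic (-E) := by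
  obtain ⟨x, y, hx, hy⟩ := hE
  exact ⟨-x, -y, fun i j => by simp [hx], fun i j => by simp [hy]⟩

theorem stratEquiv_add_of_nonStrategic (G : Game m n) {E : Game m n} (hE : NonStrategic E) :
    StratEquiv (G + E) G :=
  ⟨1, 1, one_pos, one_pos, -E, hE.neg, by simp, by simp⟩

theorem IsZeroSumEquivAdd.stratEquivZeroSum {G : Game m n} (hG : IsZeroSumEquivAdd G) :
    StratEquivZeroSum G := by
  obtain ⟨Z, E, hZ, hE, rfl⟩ := hG
  exact ⟨Z, hZ, stratEquiv_add_of_nonStrategic Z hE⟩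

theorem IsPotentialGame.stratEquivIdInterest {G : Game m n} (hG : IsPotentialGame G) :
    StratEquivIdInterest G := by
  obtain ⟨I, E, hI, hE, rfl⟩ := hG
  exact ⟨I, hI, stratEquiv_add_of_nonStrategic I hE⟩

theorem StratEquivZeroSum.exists_smul_add_smul_mem {G : Game m n} (hG : StratEquivZeroSum G) :
    ∃ α β : ℝ, 0 < α ∧ 0 < β ∧ α • G.1 + β • G.2 ∈ separableMatrices (Fin m) (Fin n) := by
  obtain ⟨Z, hZ, α, β, hα, hβ, E, hE, hZ₁, hZ₂⟩ := hG
  have hsum : α • G.1 + β • G.2 = -(E.1 + E.2) := by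
    rw [eq_neg_iff_add_eq_zero, ← hZ, hZ₁, hZ₂]; abel
  refine ⟨α, β, hα, hβ, ?_⟩
  rw [hsum]
  exact neg_mem (add_mem hE.fst_mem_separableMatrices hE.snd_mem_separableMatrices)

theorem StratEquivIdInterest.exists_smul_sub_smul_mem {G : Game m n}
    (hG : StratEquivIdInterest G) :
    ∃ γ δ : ℝ, 0 < γ ∧ 0 < δ ∧ γ • G.1 - δ • G.2 ∈ separableMatrices (Fin m) (Fin n) := by
  obtain ⟨I, hI, γ, δ, hγ, hδ, E, hE, hI₁, hI₂⟩ := hG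
  have hdiff : γ • G.1 - δ • G.2 = E.2 - E.1 := by
    rw [sub_eq_sub_iff_add_eq_add, ← hI₁, hI, hI₂, add_comm]
  refine ⟨γ, δ, hγ, hδ, ?_⟩
  rw [hdiff]
  exact sub_mem hE.snd_mem_separableMatrices hE.fst_mem_separableMatrices

theorem isZeroSumEquivAdd_of_mem_separableMatrices {G : Game m n}
    (hA : G.1 ∈ separableMatrices (Fin m) (Fin n))
    (hB : G.2 ∈ separableMatrices (Fin m) (Fin n)) : IsZeroSumEquivAdd G := by
  obtain ⟨a, b, hA⟩ := hA
  obtain ⟨c, d, hB⟩ := hB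
  -- `G - E` is `(a i - d j, d j - a i)`
  let E : Game m n := (of fun _ j => b j + d j, of fun i _ => a i + c i)
  refine ⟨G - E, E, ?_, ⟨_, _, fun _ _ => rfl, fun _ _ => rfl⟩, (sub_add_cancel G E).symm⟩
  ext i j
  simp only [Prod.fst_sub, Prod.snd_sub, Matrix.add_apply, Matrix.sub_apply, of_apply,
    Matrix.zero_apply, E, hA, hB]
  ring

theorem isPotentialGame_of_mem_separableMatrices {G : Game m n}
    (hA : G.1 ∈ separableMatrices (Fin m) (Fin n))
    (hB : G.2 ∈ separableMatrices (Fin m) (Fin n)) : IsPotentialGame G := by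
  obtain ⟨a, b, hA⟩ := hA
  obtain ⟨c, d, hB⟩ := hB
  -- `G - E` is `(a i + d j, a i + d j)`
  let E : Game m n := (of fun _ j => b j - d j, of fun i _ => c i - a i)
  refine ⟨G - E, E, ?_, ⟨_, _, fun _ _ => rfl, fun _ _ => rfl⟩, (sub_add_cancel G E).symm⟩
  ext i j
  simp only [Prod.fst_sub, Prod.snd_sub, Matrix.sub_apply, of_apply, E, hA, hB]
  ring

end Games

theorem stmt10_general {m n : ℕ} (G : Game m n) :
    ((StratEquivZeroSum G ∧ StratEquivIdInterest G) ↔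
      (IsZeroSumEquivAdd G ∧ IsPotentialGame G)) ∧
    ((IsZeroSumEquivAdd G ∧ IsPotentialGame G) ↔ IsZSEP G) := by
  refine ⟨⟨fun ⟨hZ, hI⟩ => ?_, fun ⟨hZ, hI⟩ => ⟨hZ.stratEquivZeroSum, hI.stratEquivIdInterest⟩⟩,
    and_comm⟩
  obtain ⟨α, β, hα, hβ, hsum⟩ := hZ.exists_smul_add_smul_mem
  obtain ⟨γ, δ, hγ, hδ, hdiff⟩ := hI.exists_smul_sub_smul_mem
  obtain ⟨hA, hB⟩ := Submodule.mem_and_mem_of_smul_add_smul_mem_of_smul_sub_smul_mem _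
    (by positivity) hsum hdiff
  exact ⟨isZeroSumEquivAdd_of_mem_separableMatrices hA hB,
    isPotentialGame_of_mem_separableMatrices hA hB⟩

theorem stmt10 {m n : ℕ} (hm : 1 ≤ m) (hn : 1 ≤ n) (G : Game m n) :
    ((StratEquivZeroSum G ∧ StratEquivIdInterest G) ↔
      (IsZeroSumEquivAdd G ∧ IsPotentialGame G)) ∧
    ((IsZeroSumEquivAdd G ∧ IsPotentialGame G) ↔ IsZSEP G) :=
  stmt10_general G
end
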